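/- In the group presented by generators ã_i (i ∈ Z/3), derived from the Dynnikov presentation: setting ẽ_i = c̃_i ã_i in the group generated by ã_i, c̃_i, b̃_i, d̃_i with relations c̃_{i-1} ã_{i-1} c̃_{i+1} ã_{i+1} = 1 for all i ∈ Z/3 and ã_1 c̃_2 ã_2 c̃_0 ã_0 c̃_1 = 1, one has ẽ_0 = ẽ_1 = ẽ_2 and ẽ_0 = 1; hence c̃_i = ã_i^{-1} for all i. -/

import Mathlib

/-- The six group generators `ã_i, c̃_i` (`i ∈ ℤ/3`). -/
inductive Letter : Type
  | a (i : ZMod 3)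
  | c (i : ZMod 3)

/-- A generator as an element of the free group. -/
def f (x : Letter) : FreeGroup Letter := FreeGroup.of x

/-- The relators: `c̃_{i-1} ã_{i-1} c̃_{i+1} ã_{i+1} = 1` for all `i ∈ ℤ/3`,
and `ã_1 c̃_2 ã_2 c̃_0 ã_0 c̃_1 = 1`. -/
inductive isRel : FreeGroup Letter → Prop
  | rCycle (i : ZMod 3) :
      isRel (f (.c (i - 1)) * f (.a (i - 1)) * f (.c (i + 1)) * f (.a (i + 1)))
  | rLong :
      isRel (f (.a 1) * f (.c 2) * f (.a 2) * f (.c 0) * f (.a 0) * f (.c 1))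

/-- The relator set. -/
def rels : Set (FreeGroup Letter) := {w | isRel w}

/-- The presented group. -/
abbrev G : Type := PresentedGroup rels

/-- `ẽ_i = c̃_i ã_i` in the presented group. -/
def e (i : ZMod 3) : G :=
  PresentedGroup.of (Letter.c i) * PresentedGroup.of (Letter.a i)

/-- One has `ẽ_0 = ẽ_1 = ẽ_2`, `ẽ_0 = 1`, and hence `c̃_i = ã_i⁻¹` for all `i`. -/
theorem e_trivial :
    e 0 = e 1 ∧ e 1 = e 2 ∧ e 0 = 1 ∧
    ∀ i : ZMod 3,
      (PresentedGroup.of (Letter.c i) : G) = (PresentedGroup.of (Letter.a i))⁻¹ := by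
  have rel1 : ∀ r, isRel r → (QuotientGroup.mk r : G) = 1 := fun r hr =>
    (QuotientGroup.eq_one_iff r).mpr (Subgroup.subset_normalClosure hr)
  have key : ∀ i : ZMod 3, e (i - 1) * e (i + 1) = 1 := by
    intro i
    have := rel1 _ (isRel.rCycle i)
    simp only [f, QuotientGroup.mk_mul, mul_assoc] at this; simp only [e, mul_assoc]; exact this
  have h02 : e 0 * e 2 = 1 := by have := key 1; rwa [show (1:ZMod 3) - 1 = 0 by decide, show (1:ZMod 3) + 1 = 2 by decide] at this
  have h10 : e 1 * e 0 = 1 := by have := key 2; rwa [show (2:ZMod 3) - 1 = 1 by decide, show (2:ZMod 3) + 1 = 0 by decide] at this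
  have h21 : e 2 * e 1 = 1 := by have := key 0; rwa [show (0:ZMod 3) - 1 = 2 by decide, show (0:ZMod 3) + 1 = 1 by decide] at this
  -- long relation : a1 * e2 * e0 * c1 = 1
  have hlong := rel1 _ isRel.rLong
  have h20 : e 2 * e 0 = 1 := by
    rw [eq_inv_of_mul_eq_one_left h02, mul_inv_cancel]
  have hc1 : (PresentedGroup.of (Letter.c 1) : G) = (PresentedGroup.of (Letter.a 1))⁻¹ := by
    have h : (PresentedGroup.of (Letter.a 1) : G) * (e 2 * e 0) *
        PresentedGroup.of (Letter.c 1) = 1 := by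
      simp only [f, QuotientGroup.mk_mul, mul_assoc] at hlong; simp only [e, mul_assoc]; exact hlong
    rw [h20, mul_one] at h
    exact eq_inv_of_mul_eq_one_right h
  have he1 : e 1 = 1 := by
    rw [e, hc1, inv_mul_cancel]
  have he0 : e 0 = 1 := by
    have := h10; rw [he1, one_mul] at this; exact this
  have he2 : e 2 = 1 := by
    have := h21; rw [he1, mul_one] at this; exact this
  refine ⟨he0.trans he1.symm, he1.trans he2.symm, he0, ?_⟩
  have hall : ∀ i : ZMod 3, e i = 1 := by
    intro i
    fin_cases i
    · exact he0
    · exact he1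
    · exact he2
  intro i
  have := hall i
  rw [e] at this
  exact eq_inv_of_mul_eq_one_left this
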